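/- Let G be a finite connected graph with |V| ≥ 3, let T ⊆ V be a twin class of G, and let d be a derivation of the evolution algebra A(G) with matrix (d_{ij}). Then d_{ii} = 0 for every i ∈ T, and d_{ℓℓ} = 0 for every ℓ adjacent to some vertex of T. -/

import Mathlib

/-!
The first family of equations forces `d k i = 0` unless `k` and `i` are twins, and
`d k i = - d i k` for distinct twins. Hence, for an edge `j l` with `C j` the twin class of `j`,
the second family at `(l, i)`, `i ∈ C j`, reads `∑_{k ∈ C j} d k i = 2 d l l`, and summing over
`i ∈ C j` the off-diagonal terms cancel: `τ_j := ∑_{i ∈ C j} d i i = 2 |C j| d l l`. Summing this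
over the twins of `l`, all adjacent to `j`, and swapping the roles of `j` and `l` gives
`|C l| τ_j = 4 |C l| τ_j`, so `τ_j = 0` and `d l l = 0`: the diagonal of `d` vanishes at every non-isolated vertex.
-/

open Finset

theorem Finset.sum_sum_eq_sum_diag_of_add_swap_eq_zero {ι M : Type*} [AddCommMonoid M]
    (s : Finset ι) (f : ι → ι → M) (hf : ∀ i ∈ s, ∀ j ∈ s, i ≠ j → f i j + f j i = 0) :
    ∑ i ∈ s, ∑ j ∈ s, f i j = ∑ i ∈ s, f i i := by
  classical
  have hoff : ∑ p ∈ s.offDiag, f p.1 p.2 = 0 :=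
    sum_involution (fun p _ => p.swap)
      (fun p hp => by
        obtain ⟨hp₁, hp₂, hne⟩ := mem_offDiag.mp hp
        exact hf _ hp₁ _ hp₂ hne)
      (fun p hp _ => by
        obtain ⟨-, -, hne⟩ := mem_offDiag.mp hp
        exact fun h => hne (congrArg Prod.snd h))
      (fun p hp => by
        obtain ⟨hp₁, hp₂, hne⟩ := mem_offDiag.mp hp
        exact mem_offDiag.mpr ⟨hp₂, hp₁, hne.symm⟩)
      (fun p _ => p.swap_swap)
  rw [← sum_product', ← diag_union_offDiag, sum_union (disjoint_diag_offDiag s), hoff, add_zero,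
    sum_diag]

namespace SimpleGraph

variable {V K : Type*} (G : SimpleGraph V) [DecidableRel G.Adj]

-- The matrix form of the two families of equations defining a derivation of `A(G)`.
def DerivationCrossEqns [Semiring K] (d : V → V → K) : Prop :=
  ∀ i j k : V, i ≠ j →
    (if G.Adj j k then (1:K) else 0) * d i j + (if G.Adj i k then (1:K) else 0) * d j i = 0

def DerivationRowEqns [Fintype V] [Semiring K] (d : V → V → K) : Prop :=
  ∀ i j : V, ∑ k, (if G.Adj i k then (1:K) else 0) * d k j =
    2 * (if G.Adj i j then (1:K) else 0) * d i i

namespace DerivationCrossEqns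

variable {G} [Semiring K] {d : V → V → K} {i j k : V}

theorem eq_zero_of_adj_of_not_adj (h : G.DerivationCrossEqns d) (hij : i ≠ j) (hjk : G.Adj j k) (hik : ¬G.Adj i k) :
    d i j = 0 := by
  simpa [hjk, hik] using h i j k hij

theorem add_swap_eq_zero (h : G.DerivationCrossEqns d) (hij : i ≠ j) (hik : G.Adj i k)
    (hjk : G.Adj j k) : d i j + d j i = 0 := by
  simpa [hjk, hik] using h i j k hij

theorem eq_zero_of_neighborSet_ne (h : G.DerivationCrossEqns d) (hij : i ≠ j)
    (hN : G.neighborSet i ≠ G.neighborSet j) (hjk : G.Adj j k) : d i j = 0 := by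
  by_cases hsub : ∃ x, G.Adj j x ∧ ¬G.Adj i x
  · obtain ⟨x, hjx, hix⟩ := hsub
    exact h.eq_zero_of_adj_of_not_adj hij hjx hix
  push Not at hsub
  obtain ⟨x, hix, hjx⟩ : ∃ x, G.Adj i x ∧ ¬G.Adj j x := by
    by_contra! hsup
    exact hN (Set.ext fun x => ⟨hsup x, hsub x⟩)
  have hji : d j i = 0 := h.eq_zero_of_adj_of_not_adj hij.symm hix hjx
  simpa [hji] using h.add_swap_eq_zero hij (hsub k hjk) hjk

end DerivationCrossEqns

section TwinClass

variable [Fintype V] [DecidableEq V]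

def twinClass (j : V) : Finset V :=
  {k | G.neighborFinset k = G.neighborFinset j}

variable {G}

theorem mem_twinClass {j k : V} : k ∈ G.twinClass j ↔ G.neighborSet k = G.neighborSet j := by
  simp [twinClass, neighborFinset_def]

theorem self_mem_twinClass (j : V) : j ∈ G.twinClass j :=
  mem_twinClass.mpr rfl

theorem adj_of_mem_twinClass {j k x : V} (hk : k ∈ G.twinClass j) (hjx : G.Adj j x) :
    G.Adj k x := by
  rw [← mem_neighborSet, mem_twinClass.mp hk]
  exact hjx

variable {d : V → V → K} {j l : V}

theorem sum_twinClass_eq [Semiring K] (h1 : G.DerivationCrossEqns d)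
    (h2 : G.DerivationRowEqns d) (hjl : G.Adj j l) {i : V} (hi : i ∈ G.twinClass j) :
    ∑ k ∈ G.twinClass j, d k i = 2 * d l l := by
  have hli : G.Adj l i := (adj_of_mem_twinClass hi hjl).symm
  have hrow := h2 l i
  rw [if_pos hli, mul_one, ← sum_subset (subset_univ (G.twinClass j))] at hrow
  · refine (sum_congr rfl fun k hk => ?_).symm.trans hrow
    rw [if_pos (adj_of_mem_twinClass hk hjl).symm, one_mul]
  · intro k _ hk
    by_cases hlk : G.Adj l k
    · rw [if_pos hlk, one_mul]
      refine h1.eq_zero_of_neighborSet_ne (fun hki => hk (hki ▸ hi)) (fun hN => hk ?_) hli.symm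
      exact mem_twinClass.mpr (hN.trans (mem_twinClass.mp hi))
    · rw [if_neg hlk, zero_mul]

theorem sum_diag_twinClass_eq [CommSemiring K] (h1 : G.DerivationCrossEqns d)
    (h2 : G.DerivationRowEqns d) (hjl : G.Adj j l) :
    ∑ i ∈ G.twinClass j, d i i = 2 * #(G.twinClass j) * d l l := by
  have hskew : ∀ i ∈ G.twinClass j, ∀ k ∈ G.twinClass j, i ≠ k → d k i + d i k = 0 :=
    fun i hi k hk hik => h1.add_swap_eq_zero hik.symm (adj_of_mem_twinClass hk hjl)
      (adj_of_mem_twinClass hi hjl)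
  calc ∑ i ∈ G.twinClass j, d i i
      = ∑ i ∈ G.twinClass j, ∑ k ∈ G.twinClass j, d k i :=
        (sum_sum_eq_sum_diag_of_add_swap_eq_zero _ (fun i k => d k i) hskew).symm
    _ = ∑ _i ∈ G.twinClass j, 2 * d l l := sum_congr rfl fun i hi => sum_twinClass_eq h1 h2 hjl hi
    _ = 2 * #(G.twinClass j) * d l l := by rw [sum_const, nsmul_eq_mul]; ring

theorem sum_diag_twinClass_eq_zero [Field K] [CharZero K] (h1 : G.DerivationCrossEqns d)
    (h2 : G.DerivationRowEqns d) (hjl : G.Adj j l) :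
    ∑ i ∈ G.twinClass j, d i i = 0 := by
  have hcross : ∀ {j l : V}, G.Adj j l →
      (#(G.twinClass l) : K) * ∑ i ∈ G.twinClass j, d i i =
        2 * #(G.twinClass j) * ∑ i ∈ G.twinClass l, d i i := by
    intro j l hjl
    rw [← nsmul_eq_mul, ← sum_const, mul_sum]
    exact sum_congr rfl fun l' hl' =>
      sum_diag_twinClass_eq h1 h2 (adj_of_mem_twinClass hl' hjl.symm).symm
  have hcard : (#(G.twinClass l) : K) ≠ 0 := by
    exact_mod_cast (card_ne_zero_of_mem (self_mem_twinClass l))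
  have h3 : (3 * #(G.twinClass l) : K) * ∑ i ∈ G.twinClass j, d i i = 0 := by
    linear_combination -hcross hjl - 2 * hcross hjl.symm
  simpa [hcard] using h3

end TwinClass

theorem diag_eq_zero_of_adj [Fintype V] [Field K] [CharZero K] {d : V → V → K} {j l : V}
    (h1 : G.DerivationCrossEqns d) (h2 : G.DerivationRowEqns d) (hjl : G.Adj j l) :
    d l l = 0 := by
  classical
  have hsum := sum_diag_twinClass_eq h1 h2 hjl
  rw [sum_diag_twinClass_eq_zero h1 h2 hjl, eq_comm] at hsum
  simpa [card_ne_zero_of_mem (self_mem_twinClass j)] using hsum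

end SimpleGraph

theorem der_diag_zero_on_twin_class_general {V : Type*} [Fintype V]
    (G : SimpleGraph V) [DecidableRel G.Adj]
{K : Type*} [Field K] [CharZero K]
    (hconn : G.Connected) (hcard : 3 ≤ Fintype.card V)
    (d : V → V → K)
    (h1 : ∀ i j k : V, i ≠ j →
      (if G.Adj j k then (1:K) else 0) * d i j +
      (if G.Adj i k then (1:K) else 0) * d j i = 0)
    (h2 : ∀ i j : V, ∑ k, (if G.Adj i k then (1:K) else 0) * d k j =
      2 * (if G.Adj i j then (1:K) else 0) * d i i)
    (T : Finset V) :
    (∀ i ∈ T, d i i = 0) ∧ (∀ l : V, (∃ i ∈ T, G.Adj i l) → d l l = 0) := by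
  have : Nontrivial V := Fintype.one_lt_card_iff_nontrivial.mp (by omega)
  refine ⟨fun i _ => ?_, fun l ⟨i, _, hil⟩ => G.diag_eq_zero_of_adj h1 h2 hil⟩
  obtain ⟨w, hiw⟩ := hconn.preconnected.exists_adj_of_nontrivial i
  exact G.diag_eq_zero_of_adj h1 h2 hiw.symm

theorem der_diag_zero_on_twin_class {V : Type*} [Fintype V] [DecidableEq V]
    (G : SimpleGraph V) [DecidableRel G.Adj]
{K : Type*} [Field K] [CharZero K]
    (hconn : G.Connected) (hcard : 3 ≤ Fintype.card V)
    (d : V → V → K)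
    (h1 : ∀ i j k : V, i ≠ j →
      (if G.Adj j k then (1:K) else 0) * d i j +
      (if G.Adj i k then (1:K) else 0) * d j i = 0)
    (h2 : ∀ i j : V, ∑ k, (if G.Adj i k then (1:K) else 0) * d k j =
      2 * (if G.Adj i j then (1:K) else 0) * d i i)
    (i₀ : V) (T : Finset V)
    (hT : T = Finset.univ.filter fun j => G.neighborFinset j = G.neighborFinset i₀) :
    (∀ i ∈ T, d i i = 0) ∧ (∀ l : V, (∃ i ∈ T, G.Adj i l) → d l l = 0) :=
  der_diag_zero_on_twin_class_general G hconn hcard d h1 h2 T
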